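/- In ℂ[H_0, H_1]/(H_0⁴(2H_0+H_1), H_1⁴(H_0+2H_1)), the element 9·H_0³H_1³(2H_0+H_1)(H_0+2H_1) — i.e. the volume class Vol_1 = 3²·H_0³H_1³·(2H_0+H_1)(H_0+2H_1) — is nonzero. -/

import Mathlib

/-!
The quotient is a graded Artinian complete intersection with socle in degree 8, and the class
in question has degree 8. A nonzero ℂ-linear functional on degree-8 polynomials that vanishes
on the degree-8 part of the ideal therefore detects it: writing `c k` for its weight on
`X 0 ^ k * X 1 ^ (8 - k)`, vanishing on the multiples of `X 0 ^ 4 * (2 * X 0 + X 1)` means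
`2 * c (k + 1) + c k = 0` for `4 ≤ k < 8`, symmetrically for the other generator, which forces
`c = (1, -2, 4, -8, 16, -8, 4, -2, 1)`. On the class this functional is
`18 * (-8) + 45 * 16 + 18 * (-8) = 432 ≠ 0`.
-/

open MvPolynomial

noncomputable def chowIdeal1 : Ideal (MvPolynomial (Fin 2) ℂ) :=
  Ideal.span {X 0 ^ 4 * (2 * X 0 + X 1), X 1 ^ 4 * (X 0 + 2 * X 1)}

noncomputable def biexp (a b : ℕ) : Fin 2 →₀ ℕ := Finsupp.single 0 a + Finsupp.single 1 b

@[simp]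
lemma biexp_apply_zero (a b : ℕ) : biexp a b 0 = a := by
  simp [biexp]

@[simp]
lemma biexp_apply_one (a b : ℕ) : biexp a b 1 = b := by
  simp [biexp]

lemma biexp_inj {a b c d : ℕ} : biexp a b = biexp c d ↔ a = c ∧ b = d := by
  refine ⟨fun h => ⟨?_, ?_⟩, fun ⟨hac, hbd⟩ => hac ▸ hbd ▸ rfl⟩
  · simpa using congrArg (· 0) h
  · simpa using congrArg (· 1) h

lemma biexp_le_biexp {a b c d : ℕ} : biexp a b ≤ biexp c d ↔ a ≤ c ∧ b ≤ d := by
  refine ⟨fun h => ⟨by simpa using h 0, by simpa using h 1⟩, fun ⟨hac, hbd⟩ i => ?_⟩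
  fin_cases i <;> simpa

lemma biexp_sub_biexp (a b c d : ℕ) : biexp a b - biexp c d = biexp (a - c) (b - d) := by
  ext i
  fin_cases i <;> simp

section

variable {R : Type*} [CommRing R]

lemma monomial_biexp (a b : ℕ) (r : R) : monomial (biexp a b) r = C r * X 0 ^ a * X 1 ^ b := by
  rw [biexp, monomial_single_add, ← C_mul_X_pow_eq_monomial]
  ring

lemma firstGenerator_eq :
    (X 0 ^ 4 * (2 * X 0 + X 1) : MvPolynomial (Fin 2) R) =
      monomial (biexp 5 0) 2 + monomial (biexp 4 1) 1 := by
  simp only [monomial_biexp, map_ofNat, map_one]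
  ring

lemma secondGenerator_eq :
    (X 1 ^ 4 * (X 0 + 2 * X 1) : MvPolynomial (Fin 2) R) =
      monomial (biexp 1 4) 1 + monomial (biexp 0 5) 2 := by
  simp only [monomial_biexp, map_ofNat, map_one]
  ring

noncomputable def socleFunctional (p : MvPolynomial (Fin 2) R) : R :=
  coeff (biexp 0 8) p - 2 * coeff (biexp 1 7) p + 4 * coeff (biexp 2 6) p
    - 8 * coeff (biexp 3 5) p + 16 * coeff (biexp 4 4) p - 8 * coeff (biexp 5 3) p
    + 4 * coeff (biexp 6 2) p - 2 * coeff (biexp 7 1) p + coeff (biexp 8 0) p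

lemma socleFunctional_add (p q : MvPolynomial (Fin 2) R) :
    socleFunctional (p + q) = socleFunctional p + socleFunctional q := by
  simp only [socleFunctional, coeff_add]
  ring

lemma socleFunctional_mul_firstGenerator (q : MvPolynomial (Fin 2) R) :
    socleFunctional (q * (X 0 ^ 4 * (2 * X 0 + X 1))) = 0 := by
  rw [firstGenerator_eq]
  simp only [socleFunctional, mul_add, coeff_add, coeff_mul_monomial', biexp_le_biexp,
    biexp_sub_biexp]
  norm_num
  ring

lemma socleFunctional_mul_secondGenerator (q : MvPolynomial (Fin 2) R) :
    socleFunctional (q * (X 1 ^ 4 * (X 0 + 2 * X 1))) = 0 := by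
  rw [secondGenerator_eq]
  simp only [socleFunctional, mul_add, coeff_add, coeff_mul_monomial', biexp_le_biexp,
    biexp_sub_biexp]
  norm_num
  ring

end

lemma socleFunctional_eq_zero_of_mem {p : MvPolynomial (Fin 2) ℂ} (hp : p ∈ chowIdeal1) :
    socleFunctional p = 0 := by
  obtain ⟨a, b, rfl⟩ := Ideal.mem_span_pair.mp hp
  rw [socleFunctional_add, socleFunctional_mul_firstGenerator,
    socleFunctional_mul_secondGenerator, add_zero]

lemma socleFunctional_volumeClass :
    socleFunctional (9 * X 0 ^ 3 * X 1 ^ 3 * (2 * X 0 + X 1) * (X 0 + 2 * X 1) :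
      MvPolynomial (Fin 2) ℂ) = 432 := by
  have expand : (9 * X 0 ^ 3 * X 1 ^ 3 * (2 * X 0 + X 1) * (X 0 + 2 * X 1) :
      MvPolynomial (Fin 2) ℂ) =
        monomial (biexp 5 3) 18 + monomial (biexp 4 4) 45 + monomial (biexp 3 5) 18 := by
    simp only [monomial_biexp, map_ofNat]
    ring
  rw [expand]
  simp only [socleFunctional, coeff_add, coeff_monomial, biexp_inj]
  norm_num

theorem stmt16 :
    Ideal.Quotient.mk chowIdeal1
      (9 * X 0 ^ 3 * X 1 ^ 3 * (2 * X 0 + X 1) * (X 0 + 2 * X 1)) ≠ 0 := by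
  rw [Ne, Ideal.Quotient.eq_zero_iff_mem]
  intro hmem
  have h : (432 : ℂ) = 0 := socleFunctional_volumeClass ▸ socleFunctional_eq_zero_of_mem hmem
  norm_num at h
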